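/- arXiv:1907.04228 — 5 statements merged into one kernel-verified Lean document; each statement's English description precedes it below -/
import Mathlib

section
/- Let n̄ > 0 be a real number and define t_k = n̄^k/(1+n̄)^{k+1} for k ∈ ℕ. Then ∑_{k=0}^∞ (k+1)²·t_{k+1}² · ∫₀¹ (s·t_k + (1−s))⁻² ds = n̄²·(1+2n̄)/(1+n̄). -/
/- The Fock eigenvalues form a geometric sequence, `t k = (1 - x) x ^ k` with `x = n / (1 + n)`.
Since `∫₀¹ (s a + (1 - s))⁻² ds = a⁻¹`, the `k`-th term equals `x² (1 - x) (k + 1)² x ^ k`, and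
`∑ (k + 1)² x ^ k = (1 + x) / (1 - x)³` sums the series to `x² (1 + x) / (1 - x)²`. -/

theorem hasSum_add_one_sq_mul_geometric {𝕜 : Type*} [NormedField 𝕜] [HasSummableGeomSeries 𝕜]
    {r : 𝕜} (hr : ‖r‖ < 1) :
    HasSum (fun k : ℕ ↦ ((k : 𝕜) + 1) ^ 2 * r ^ k) ((1 + r) / (1 - r) ^ 3) := by
  have hr₁ : 1 - r ≠ 0 := sub_ne_zero.2 (ne_of_apply_ne norm (by simpa using hr.ne'))
  have hcoeff (k : ℕ) : ((k : 𝕜) + 1) ^ 2 * r ^ k =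
      2 * ((k + 2).choose 2 * r ^ k) - (k + 1).choose 1 * r ^ k := by
    have h : (k + 2) * (k + 1) = (k + 2).choose 2 * 2 := by
      simpa using Nat.add_one_mul_choose_eq (k + 1) 1
    have h' := congrArg (Nat.cast : ℕ → 𝕜) h
    push_cast [Nat.choose_one_right] at h' ⊢
    linear_combination r ^ k * h'
  have hvalue : (1 + r) / (1 - r) ^ 3 = 2 * (1 / (1 - r) ^ (2 + 1)) - 1 / (1 - r) ^ (1 + 1) := by
    field_simp
    ring
  rw [funext hcoeff, hvalue]
  exact ((hasSum_choose_mul_geometric_of_norm_lt_one 2 hr).mul_left 2).sub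
    (hasSum_choose_mul_geometric_of_norm_lt_one 1 hr)

theorem integral_inv_sq_segment {a b : ℝ} (ha : 0 < a) (hb : 0 < b) :
    ∫ s in (0 : ℝ)..1, ((s * a + (1 - s) * b) ^ 2)⁻¹ = (a * b)⁻¹ := by
  have hpos : ∀ s ∈ Set.uIcc (0 : ℝ) 1, 0 < s * a + (1 - s) * b := by
    intro s hs
    rw [Set.uIcc_of_le zero_le_one] at hs
    simpa using
      (convex_Ioi (0 : ℝ) : Convex ℝ _) ha hb hs.1 (sub_nonneg.2 hs.2) (add_sub_cancel s 1)
  have hderiv : ∀ s ∈ Set.uIcc (0 : ℝ) 1,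
      HasDerivAt (fun u ↦ u / (b * (u * a + (1 - u) * b))) ((s * a + (1 - s) * b) ^ 2)⁻¹ s := by
    intro s hs
    have hD := (hpos s hs).ne'
    have hlin : HasDerivAt (fun u : ℝ ↦ b * (u * a + (1 - u) * b)) (b * (a - b)) s :=
      ((((hasDerivAt_id' s).mul_const a).add (((hasDerivAt_const s 1).sub
        (hasDerivAt_id' s)).mul_const b)).const_mul b).congr_deriv (by ring)
    refine ((hasDerivAt_id' s).div hlin (mul_ne_zero hb.ne' hD)).congr_deriv ?_
    field_simp
    ring
  have hint : IntervalIntegrable (fun s ↦ ((s * a + (1 - s) * b) ^ 2)⁻¹) MeasureTheory.volume 0 1 :=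
    (ContinuousOn.inv₀ (by fun_prop) fun s hs ↦ pow_ne_zero 2 (hpos s hs).ne').intervalIntegrable
  rw [intervalIntegral.integral_eq_sub_of_hasDerivAt hderiv hint]
  simp [mul_comm]

/-- Scalar content of `Tr[â ρ̂₀ â† ∫₀¹ ds σ̂₀⁻¹(s) â ρ̂₀ â† σ̂₀⁻¹(s)]` for a thermal
state with Fock eigenvalues `t_k = n̄^k/(1+n̄)^{k+1}`. -/
theorem qpsk_trace_series_one (n : ℝ) (hn : 0 < n)
    (t : ℕ → ℝ) (ht : ∀ k, t k = n ^ k / (1 + n) ^ (k + 1)) :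
    ∑' k : ℕ, ((k : ℝ) + 1) ^ 2 * t (k + 1) ^ 2 *
        ∫ s in (0:ℝ)..1, ((s * t k + (1 - s)) ^ 2)⁻¹ =
      n ^ 2 * (1 + 2 * n) / (1 + n) := by
  set x := n / (1 + n) with hx
  have hx₀ : 0 < x := by positivity
  have hx₁ : ‖x‖ < 1 := by
    rw [Real.norm_of_nonneg hx₀.le, div_lt_one (by positivity)]
    linarith
  have ht_geom : ∀ k, t k = (1 - x) * x ^ k := fun k ↦ by
    rw [ht, hx, div_pow]
    field_simp
    ring
  have hterm : ∀ k : ℕ, ((k : ℝ) + 1) ^ 2 * t (k + 1) ^ 2 *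
      ∫ s in (0:ℝ)..1, ((s * t k + (1 - s)) ^ 2)⁻¹ = x ^ 2 * (1 - x) * ((k + 1) ^ 2 * x ^ k) := by
    intro k
    have htk : 0 < t k := by rw [ht]; positivity
    have h := integral_inv_sq_segment htk one_pos
    simp only [mul_one] at h
    rw [h, ht_geom, ht_geom]
    field_simp [(htk.trans_eq (ht_geom k)).ne', hx₀.ne']
    ring
  rw [tsum_congr hterm, tsum_mul_left, (hasSum_add_one_sq_mul_geometric hx₁).tsum_eq, hx]
  field_simp
  ring
end

section
/- Let n̄ > 0 be a real number and define t_k = n̄^k/(1+n̄)^{k+1} for k ∈ ℕ. Then ∑_{k=0}^∞ (k+1)²·t_k·t_{k+1}² · ∫₀¹ s·(s·t_k + (1−s))⁻³ ds = n̄²·(1+2n̄)/(2·(1+n̄)). -/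
/-!
The integral is elementary: `s ^ 2 / (2 (s t + 1 - s) ^ 2)` is an antiderivative of its integrand,
so it equals `1 / (2 t_k ^ 2)`. Since `t_{k+1} = x t_k` with `x = n̄ / (1 + n̄)`, the `k`-th term
becomes `n̄ ^ 2 / (2 (1 + n̄) ^ 3) · (k + 1) ^ 2 x ^ k`, and
`∑ (k + 1) ^ 2 x ^ k = (1 + x) / (1 - x) ^ 3` follows from the binomial series
`∑ C(k + m, m) x ^ k = (1 - x) ^ (-(m + 1))` for `m = 1, 2`.
-/

open intervalIntegral MeasureTheory

theorem hasSum_sq_succ_mul_geometric_of_norm_lt_one {𝕜 : Type*} [NormedField 𝕜]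
    [HasSummableGeomSeries 𝕜] {r : 𝕜} (hr : ‖r‖ < 1) :
    HasSum (fun n : ℕ ↦ ((n : 𝕜) + 1) ^ 2 * r ^ n) ((1 + r) / (1 - r) ^ 3) := by
  have h1r : 1 - r ≠ 0 := sub_ne_zero.2 fun h ↦ by simp [← h] at hr
  have hterm (n : ℕ) : ((n : 𝕜) + 1) ^ 2 * r ^ n =
      2 * (((n + 2).choose 2 : ℕ) * r ^ n) - ((n + 1).choose 1 : ℕ) * r ^ n := by
    have hchoose : ((n + 2).choose 2 : 𝕜) * 2 = (n + 2) * (n + 1) := by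
      simpa [add_assoc, one_add_one_eq_two] using
        congrArg (Nat.cast (R := 𝕜)) (Nat.add_one_mul_choose_eq (n + 1) 1).symm
    rw [Nat.choose_one_right, ← mul_assoc, mul_comm 2, hchoose]
    push_cast
    ring
  have hsum : (1 + r) / (1 - r) ^ 3 = 2 * (1 / (1 - r) ^ (2 + 1)) - 1 / (1 - r) ^ (1 + 1) := by
    field_simp
    ring
  rw [funext hterm, hsum]
  exact ((hasSum_choose_mul_geometric_of_norm_lt_one 2 hr).mul_left 2).sub
    (hasSum_choose_mul_geometric_of_norm_lt_one 1 hr)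

theorem integral_mul_inv_affine_pow_three {t : ℝ} (ht : 0 < t) :
    ∫ s in (0 : ℝ)..1, s * ((s * t + (1 - s)) ^ 3)⁻¹ = (2 * t ^ 2)⁻¹ := by
  have hpos : ∀ s ∈ Set.uIcc (0 : ℝ) 1, 0 < s * t + (1 - s) := by
    intro s hs
    rw [Set.uIcc_of_le zero_le_one] at hs
    rcases le_total t 1 with h | h <;> nlinarith [hs.1, hs.2]
  -- `s ^ 2 / (2 g ^ 2)` is an antiderivative since `g - s g' = 1` for `g s = s t + (1 - s)`
  have hderiv : ∀ s ∈ Set.uIcc (0 : ℝ) 1,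
      HasDerivAt (fun s ↦ s ^ 2 / (2 * (s * t + (1 - s)) ^ 2))
        (s * ((s * t + (1 - s)) ^ 3)⁻¹) s := by
    intro s hs
    have hg : HasDerivAt (fun s : ℝ ↦ s * t + (1 - s)) (t - 1) s :=
      (((hasDerivAt_id s).mul_const t).add
        ((hasDerivAt_const s 1).sub (hasDerivAt_id s))).congr_deriv (by ring)
    have hne := (hpos s hs).ne'
    refine ((hasDerivAt_pow 2 s).fun_div ((hg.fun_pow 2).const_mul 2)
      (mul_ne_zero two_ne_zero (pow_ne_zero 2 hne))).congr_deriv ?_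
    field_simp
    ring
  have hint : IntervalIntegrable (fun s : ℝ ↦ s * ((s * t + (1 - s)) ^ 3)⁻¹) volume 0 1 := by
    refine (continuousOn_id.mul (ContinuousOn.inv₀ (by fun_prop) fun s hs ↦ ?_))
      |>.intervalIntegrable
    exact (pow_pos (hpos s hs) 3).ne'
  rw [integral_eq_sub_of_hasDerivAt hderiv hint]
  field_simp
  ring

/-- Scalar content of `Tr[ρ̂₀ ∫₀¹ s ds σ̂₀⁻¹(s) â ρ̂₀ â† σ̂₀⁻¹(s) â ρ̂₀ â† σ̂₀⁻¹(s)]`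
for a thermal state with Fock eigenvalues `t_k = n̄^k/(1+n̄)^{k+1}`. -/
theorem qpsk_trace_series_two (n : ℝ) (hn : 0 < n)
    (t : ℕ → ℝ) (ht : ∀ k, t k = n ^ k / (1 + n) ^ (k + 1)) :
    ∑' k : ℕ, ((k : ℝ) + 1) ^ 2 * t k * t (k + 1) ^ 2 *
        ∫ s in (0:ℝ)..1, s * ((s * t k + (1 - s)) ^ 3)⁻¹ =
      n ^ 2 * (1 + 2 * n) / (2 * (1 + n)) := by
  have h1n : 0 < 1 + n := by linarith
  have hx : ‖n / (1 + n)‖ < 1 := by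
    rw [Real.norm_of_nonneg (by positivity), div_lt_one h1n]
    linarith
  have hterm (k : ℕ) : ((k : ℝ) + 1) ^ 2 * t k * t (k + 1) ^ 2 *
      ∫ s in (0:ℝ)..1, s * ((s * t k + (1 - s)) ^ 3)⁻¹ =
        n ^ 2 / (2 * (1 + n) ^ 3) * (((k : ℝ) + 1) ^ 2 * (n / (1 + n)) ^ k) := by
    rw [integral_mul_inv_affine_pow_three (by rw [ht k]; positivity), ht k, ht (k + 1)]
    simp only [div_pow]
    field_simp
    ring
  rw [tsum_congr hterm, tsum_mul_left, (hasSum_sq_succ_mul_geometric_of_norm_lt_one hx).tsum_eq]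
  field_simp
  ring
end

section
/- Let n̄ > 0 be a real number and define t_k = n̄^k/(1+n̄)^{k+1} for k ∈ ℕ. Then ∑_{k=0}^∞ (k+1)·(k+2)·t_k·t_{k+2} · ∫₀¹ (s·t_k + (1−s))⁻² ds = 2n̄². -/
/-!
Since `s ↦ s / (s t + (1 - s))` is an antiderivative of `(s t + (1 - s))⁻²`, the integral equals
`t_k⁻¹`, so the `k`-th term collapses to `2 (k+2 choose 2) t_{k+2}`. Summing the negative-binomial
series `∑ (k+2 choose 2) xᵏ = (1 - x)⁻³` at `x = n̄ / (1 + n̄)` gives `∑ (k+2 choose 2) t_{k+2} = n̄²`.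
-/

open intervalIntegral

lemma integral_inv_sq_affine {t : ℝ} (ht : 0 < t) :
    ∫ s in (0:ℝ)..1, ((s * t + (1 - s)) ^ 2)⁻¹ = t⁻¹ := by
  have hpos : ∀ s ∈ Set.uIcc (0:ℝ) 1, 0 < s * t + (1 - s) := by
    intro s hs
    rw [Set.uIcc_of_le zero_le_one] at hs
    rcases eq_or_lt_of_le hs.2 with rfl | hs1
    · simpa using ht
    · nlinarith [mul_nonneg hs.1 ht.le]
  have hderiv : ∀ s ∈ Set.uIcc (0:ℝ) 1,
      HasDerivAt (fun s : ℝ => s / (s * t + (1 - s))) ((s * t + (1 - s)) ^ 2)⁻¹ s := by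
    intro s hs
    have hden : HasDerivAt (fun s : ℝ => s * t + (1 - s)) (t - 1) s :=
      (((hasDerivAt_id' s).mul_const t).add
        ((hasDerivAt_const s (1:ℝ)).sub (hasDerivAt_id' s))).congr_deriv (by ring)
    refine ((hasDerivAt_id' s).div hden (hpos s hs).ne').congr_deriv ?_
    field_simp
    ring
  have hint : IntervalIntegrable (fun s : ℝ => ((s * t + (1 - s)) ^ 2)⁻¹) MeasureTheory.volume 0 1 :=
    ContinuousOn.intervalIntegrable <| ContinuousOn.inv₀ (by fun_prop)
      fun s hs => pow_ne_zero 2 (hpos s hs).ne'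
  rw [integral_eq_sub_of_hasDerivAt hderiv hint]
  simp

lemma tsum_choose_two_mul_geometric_weight {n : ℝ} (hn : 0 ≤ n) :
    ∑' k : ℕ, ((k + 2).choose 2 : ℝ) * (n ^ (k + 2) / (1 + n) ^ (k + 3)) = n ^ 2 := by
  have h1n : 0 < 1 + n := by linarith
  have hx : ‖n / (1 + n)‖ < 1 := by
    rw [Real.norm_eq_abs, abs_of_nonneg (by positivity), div_lt_one h1n]
    linarith
  have hterm : ∀ k : ℕ, ((k + 2).choose 2 : ℝ) * (n ^ (k + 2) / (1 + n) ^ (k + 3)) =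
      n ^ 2 / (1 + n) ^ 3 * (((k + 2).choose 2 : ℝ) * (n / (1 + n)) ^ k) := by
    intro k
    rw [div_pow, pow_add, pow_add]
    field_simp
  have h1x : 1 - n / (1 + n) = (1 + n)⁻¹ := by
    field_simp
    ring
  rw [tsum_congr hterm, tsum_mul_left, tsum_choose_mul_geometric_of_norm_lt_one 2 hx, h1x,
    inv_pow, one_div, inv_inv]
  field_simp

/-- Scalar content of `Tr[ρ̂₀ ∫₀¹ ds σ̂₀⁻¹(s) â² ρ̂₀ (â†)² σ̂₀⁻¹(s)]` for a thermal
state with Fock eigenvalues `t_k = n̄^k/(1+n̄)^{k+1}`. -/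
theorem qpsk_trace_series_three (n : ℝ) (hn : 0 < n)
    (t : ℕ → ℝ) (ht : ∀ k, t k = n ^ k / (1 + n) ^ (k + 1)) :
    ∑' k : ℕ, ((k : ℝ) + 1) * ((k : ℝ) + 2) * t k * t (k + 2) *
        ∫ s in (0:ℝ)..1, ((s * t k + (1 - s)) ^ 2)⁻¹ =
      2 * n ^ 2 := by
  have hterm : ∀ k : ℕ, ((k : ℝ) + 1) * ((k : ℝ) + 2) * t k * t (k + 2) *
        ∫ s in (0:ℝ)..1, ((s * t k + (1 - s)) ^ 2)⁻¹ =
      2 * (((k + 2).choose 2 : ℝ) * (n ^ (k + 2) / (1 + n) ^ (k + 3))) := by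
    intro k
    have htk : 0 < t k := by rw [ht k]; positivity
    rw [integral_inv_sq_affine htk, Nat.cast_choose_two, ht (k + 2)]
    push_cast
    field_simp
    ring
  rw [tsum_congr hterm, tsum_mul_left, tsum_choose_two_mul_geometric_weight hn.le]
end

section
/- Let n̄ > 0 be a real number and define t_k = n̄^k/(1+n̄)^{k+1} for k ∈ ℕ. Then for every natural number k ≥ 2, t_k · ∫₀¹ (s·t_k + (1−s))⁻¹·(s·t_{k−2} + (1−s))⁻¹ ds = (2n̄²/(1+2n̄))·log(1 + 1/n̄), where log is the natural logarithm; in particular the value is independent of k. -/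
/-!
The integrand is a product of reciprocals of two affine functions of `s`, so partial fractions give
the antiderivative `(log (s a + 1 - s) - log (s b + 1 - s)) / (a - b)` and the integral is the
reciprocal logarithmic mean `(log a - log b) / (a - b)`. For the thermal weights `a = t (k+2)`,
`b = t k` the ratio `a / b = (n / (1 + n))²` does not depend on `k`, and `a - b = -a (1 + 2n) / n²`,
so after multiplying by `a` every dependence on `k` cancels.
-/

open Real Set

section AffineInterpolation

lemma interp_one_pos {c s : ℝ} (hc : 0 < c) (hs : s ∈ Icc (0 : ℝ) 1) : 0 < s * c + (1 - s) := by
  rcases hs.2.eq_or_lt with rfl | hs1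
  · simpa using hc
  · nlinarith [hs.1]

lemma hasDerivAt_log_interp_one {c s : ℝ} (hs : s * c + (1 - s) ≠ 0) :
    HasDerivAt (fun x ↦ log (x * c + (1 - x))) ((c - 1) / (s * c + (1 - s))) s := by
  have h : HasDerivAt (fun x : ℝ ↦ x * c + (1 - x)) (c - 1) s :=
    (((hasDerivAt_id s).mul_const c).add ((hasDerivAt_const s 1).sub
      (hasDerivAt_id s))).congr_deriv (by ring)
  exact h.log hs

theorem integral_inv_interp_one_mul_inv_interp_one {a b : ℝ} (ha : 0 < a) (hb : 0 < b)
    (hab : a ≠ b) :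
    ∫ s in (0 : ℝ)..1, (s * a + (1 - s))⁻¹ * (s * b + (1 - s))⁻¹ =
      (log a - log b) / (a - b) := by
  have hderiv : ∀ s ∈ uIcc (0 : ℝ) 1, HasDerivAt
      (fun x ↦ (log (x * a + (1 - x)) - log (x * b + (1 - x))) / (a - b))
      ((s * a + (1 - s))⁻¹ * (s * b + (1 - s))⁻¹) s := by
    intro s hs
    rw [uIcc_of_le zero_le_one] at hs
    have hX := (interp_one_pos ha hs).ne'
    have hY := (interp_one_pos hb hs).ne'
    refine (((hasDerivAt_log_interp_one hX).sub
      (hasDerivAt_log_interp_one hY)).div_const _).congr_deriv ?_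
    have partial_fractions :
        (a - 1) * (s * b + (1 - s)) - (s * a + (1 - s)) * (b - 1) = a - b := by ring
    rw [div_sub_div _ _ hX hY, partial_fractions, div_div]
    field_simp
  have hcont : ContinuousOn (fun s : ℝ ↦ (s * a + (1 - s))⁻¹ * (s * b + (1 - s))⁻¹)
      (uIcc 0 1) := by
    rw [uIcc_of_le zero_le_one]
    exact (ContinuousOn.inv₀ (by fun_prop) fun s hs ↦ (interp_one_pos ha hs).ne').mul
      (ContinuousOn.inv₀ (by fun_prop) fun s hs ↦ (interp_one_pos hb hs).ne')
  rw [intervalIntegral.integral_eq_sub_of_hasDerivAt hderiv hcont.intervalIntegrable]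
  simp

end AffineInterpolation

/-- Fock-basis eigenvalues of the thermal state with mean photon number `n`. -/
noncomputable def thermalWeight (n : ℝ) (k : ℕ) : ℝ := n ^ k / (1 + n) ^ (k + 1)

section ThermalWeight

variable {n : ℝ}

lemma thermalWeight_pos (hn : 0 < n) (k : ℕ) : 0 < thermalWeight n k := by
  unfold thermalWeight; positivity

lemma thermalWeight_add_two_sub (hn : 0 < n) (k : ℕ) :
    thermalWeight n (k + 2) - thermalWeight n k =
      -thermalWeight n (k + 2) * (1 + 2 * n) / n ^ 2 := by
  unfold thermalWeight
  field_simp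
  ring

lemma thermalWeight_add_two_ne (hn : 0 < n) (k : ℕ) :
    thermalWeight n (k + 2) ≠ thermalWeight n k := by
  rw [← sub_ne_zero, thermalWeight_add_two_sub hn]
  have := thermalWeight_pos hn (k + 2)
  exact div_ne_zero (by nlinarith) (by positivity)

lemma log_thermalWeight_add_two_sub (hn : 0 < n) (k : ℕ) :
    log (thermalWeight n (k + 2)) - log (thermalWeight n k) = -2 * log (1 + 1 / n) := by
  have hn1 : (1 : ℝ) + n ≠ 0 := by positivity
  unfold thermalWeight
  rw [log_div (by positivity) (by positivity), log_div (by positivity) (by positivity),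
    show (1 : ℝ) + 1 / n = (1 + n) / n by field_simp; ring, log_div hn1 hn.ne']
  simp only [log_pow]
  push_cast
  ring

end ThermalWeight

/-- Scalar content of Eq. (66): for `k ≥ 2`,
`t_k ∫₀¹ (s t_k + (1−s))⁻¹ (s t_{k−2} + (1−s))⁻¹ ds = (2n̄²/(1+2n̄)) log(1+1/n̄)`,
independent of `k`. -/
theorem bpsk_offdiag_integral (n : ℝ) (hn : 0 < n)
    (t : ℕ → ℝ) (ht : ∀ k, t k = n ^ k / (1 + n) ^ (k + 1))
    (k : ℕ) (hk : 2 ≤ k) :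
    t k * ∫ s in (0:ℝ)..1, (s * t k + (1 - s))⁻¹ * (s * t (k - 2) + (1 - s))⁻¹ =
      (2 * n ^ 2 / (1 + 2 * n)) * Real.log (1 + 1 / n) := by
  obtain rfl : t = thermalWeight n := funext ht
  obtain ⟨m, rfl⟩ : ∃ m, k = m + 2 := ⟨k - 2, by omega⟩
  rw [Nat.add_sub_cancel, integral_inv_interp_one_mul_inv_interp_one (thermalWeight_pos hn _)
    (thermalWeight_pos hn _) (thermalWeight_add_two_ne hn m), log_thermalWeight_add_two_sub hn,
    thermalWeight_add_two_sub hn]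
  have := (thermalWeight_pos hn (m + 2)).ne'
  field_simp
end

section
/- Let n̄ > 0 be a real number and define t_k = n̄^k/(1+n̄)^{k+1} for k ∈ ℕ. Then for every natural number k, t_{k+2}² · ∫₀¹ s·(s·t_k + (1−s))⁻²·(s·t_{k+2} + (1−s))⁻¹ ds = (2n̄⁴/(1+2n̄)²)·log(1 + 1/n̄) − n̄⁴/((1+n̄)²·(1+2n̄)), where log is the natural logarithm; in particular the value is independent of k. -/
/-!
With `u s = s a + (1 - s)` and `v s = s b + (1 - s)`, partial fractions give the antiderivative
`(log u - log v) / (b - a)² + s / ((b - a) u)` of `s / (u² v)` on `[0, 1]`, hence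
`∫₀¹ s / (u² v) = (log a - log b) / (b - a)² + 1 / (a (b - a))`.
Since `t_{k+2} = q t_k` with `q = (n̄ / (1 + n̄))²`, multiplying by `t_{k+2}² = q² t_k²` cancels
every occurrence of `t_k`, leaving `-(q / (q - 1))² log q + q² / (q - 1)`.
-/

open Real Set intervalIntegral

lemma mul_add_one_sub_pos {a s : ℝ} (ha : 0 < a) (hs : s ∈ uIcc (0 : ℝ) 1) :
    0 < s * a + (1 - s) := by
  rw [uIcc_of_le zero_le_one] at hs
  rcases hs.2.eq_or_lt with rfl | hs1
  · simpa using ha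
  · nlinarith [mul_nonneg hs.1 ha.le]

lemma hasDerivAt_mul_add_one_sub (a s : ℝ) :
    HasDerivAt (fun s : ℝ => s * a + (1 - s)) (a - 1) s :=
  (((hasDerivAt_id s).mul_const a).add
    ((hasDerivAt_const s (1 : ℝ)).sub (hasDerivAt_id s))).congr_deriv (by ring)

lemma hasDerivAt_log_sub_log_add_div {a b s : ℝ} (hab : a ≠ b)
    (hu : 0 < s * a + (1 - s)) (hv : 0 < s * b + (1 - s)) :
    HasDerivAt
      (fun s : ℝ => (log (s * a + (1 - s)) - log (s * b + (1 - s))) / (b - a) ^ 2 +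
        s / ((b - a) * (s * a + (1 - s))))
      (s * ((s * a + (1 - s)) ^ 2)⁻¹ * (s * b + (1 - s))⁻¹) s := by
  have hba : b - a ≠ 0 := sub_ne_zero.mpr hab.symm
  have hlog := (((hasDerivAt_mul_add_one_sub a s).log hu.ne').sub
    ((hasDerivAt_mul_add_one_sub b s).log hv.ne')).div_const ((b - a) ^ 2)
  have hfrac := (hasDerivAt_id s).div ((hasDerivAt_mul_add_one_sub a s).const_mul (b - a))
    (mul_ne_zero hba hu.ne')
  refine (hlog.add hfrac).congr_deriv ?_
  -- `field_simp` looks for these after normalising `s * a` to `a * s`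
  have hu' : a * s + (1 - s) ≠ 0 := mul_comm s a ▸ hu.ne'
  have hv' : b * s + (1 - s) ≠ 0 := mul_comm s b ▸ hv.ne'
  simp only [id]
  field_simp
  ring

lemma integral_mul_inv_sq_mul_inv {a b : ℝ} (ha : 0 < a) (hb : 0 < b) (hab : a ≠ b) :
    ∫ s in (0 : ℝ)..1, s * ((s * a + (1 - s)) ^ 2)⁻¹ * (s * b + (1 - s))⁻¹ =
      (log a - log b) / (b - a) ^ 2 + 1 / (a * (b - a)) := by
  have hcont : ContinuousOn
      (fun s : ℝ => s * ((s * a + (1 - s)) ^ 2)⁻¹ * (s * b + (1 - s))⁻¹) (uIcc 0 1) := by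
    refine ContinuousOn.mul (continuousOn_id.mul ?_) ?_
    · exact (by fun_prop : Continuous fun s : ℝ => (s * a + (1 - s)) ^ 2).continuousOn.inv₀
        fun s hs => (pow_pos (mul_add_one_sub_pos ha hs) 2).ne'
    · exact (by fun_prop : Continuous fun s : ℝ => s * b + (1 - s)).continuousOn.inv₀
        fun s hs => (mul_add_one_sub_pos hb hs).ne'
  rw [integral_eq_sub_of_hasDerivAt
    (fun s hs => hasDerivAt_log_sub_log_add_div hab (mul_add_one_sub_pos ha hs)
      (mul_add_one_sub_pos hb hs)) hcont.intervalIntegrable]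
  simp only [one_mul, sub_self, add_zero, zero_mul, zero_add, log_one, sub_zero, zero_div]
  ring

lemma sq_mul_integral_mul_inv_sq_mul_inv_of_mul {a q : ℝ} (ha : 0 < a) (hq : 0 < q) (hq1 : q ≠ 1) :
    (a * q) ^ 2 *
        ∫ s in (0 : ℝ)..1, s * ((s * a + (1 - s)) ^ 2)⁻¹ * (s * (a * q) + (1 - s))⁻¹ =
      -(q / (q - 1)) ^ 2 * log q + q ^ 2 / (q - 1) := by
  have hq1' : q - 1 ≠ 0 := sub_ne_zero.mpr hq1
  have haq : a ≠ a * q := by simpa [ha.ne', eq_comm] using hq1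
  rw [integral_mul_inv_sq_mul_inv ha (mul_pos ha hq) haq, log_mul ha.ne' hq.ne']
  field_simp
  ring

/-- Scalar content of Eq. (74): for every `k`,
`t_{k+2}² ∫₀¹ s (s t_k + (1−s))⁻² (s t_{k+2} + (1−s))⁻¹ ds
  = (2n̄⁴/(1+2n̄)²) log(1+1/n̄) − n̄⁴/((1+n̄)²(1+2n̄))`, independent of `k`. -/
theorem bpsk_second_integral (n : ℝ) (hn : 0 < n)
    (t : ℕ → ℝ) (ht : ∀ k, t k = n ^ k / (1 + n) ^ (k + 1))
    (k : ℕ) :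
    t (k + 2) ^ 2 *
        ∫ s in (0:ℝ)..1, s * ((s * t k + (1 - s)) ^ 2)⁻¹ * (s * t (k + 2) + (1 - s))⁻¹ =
      (2 * n ^ 4 / (1 + 2 * n) ^ 2) * Real.log (1 + 1 / n) -
        n ^ 4 / ((1 + n) ^ 2 * (1 + 2 * n)) := by
  have hr_pos : 0 < n / (1 + n) := by positivity
  have hr_lt_one : n / (1 + n) < 1 := (div_lt_one (by positivity)).mpr (by linarith)
  have ht_succ_succ : t (k + 2) = t k * (n / (1 + n)) ^ 2 := by
    have : 1 + n ≠ 0 := by positivity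
    rw [ht, ht]
    field_simp
    ring
  have hlog : log ((n / (1 + n)) ^ 2) = -(2 * log (1 + 1 / n)) := by
    rw [log_pow, ← inv_div, log_inv, add_div, div_self hn.ne', Nat.cast_ofNat,
      mul_neg, add_comm]
  have hq_sub_one : (n / (1 + n)) ^ 2 - 1 = -(1 + 2 * n) / (1 + n) ^ 2 := by field_simp; ring
  rw [ht_succ_succ, sq_mul_integral_mul_inv_sq_mul_inv_of_mul (by rw [ht]; positivity)
    (pow_pos hr_pos 2) (pow_lt_one₀ hr_pos.le hr_lt_one two_ne_zero).ne, hlog, hq_sub_one]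
  have h2n : 1 + 2 * n ≠ 0 := by positivity
  field_simp
  ring
end
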